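/- Let f : X → Y be a continuous 1-Lipschitz surjection between compact metric spaces, where X is a geodesic space, and let ε > PD(f). Then f is ε-refining; that is, there exists δ ∈ (0,ε) such that whenever d(a,b) < δ in Y, a' ∈ f⁻¹(a), b' ∈ f⁻¹(b), then for every κ > 0 there is a κ-chain α in X from a' to b' with [f(α)]_ε = [a,b]_ε. -/

import Mathlib

namespace WC

/-- A chain for the relation `R`: consecutive entries of the list satisfy `R`. -/
def IsChain {Y : Type*} (R : Y → Y → Prop) (α : List Y) : Prop :=
  List.Chain' R α

/-- A basic move between chains: adding or removing a single point other than an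
endpoint (the first and last points, as values, are unchanged). -/
def Move {Y : Type*} (R : Y → Y → Prop) (α β : List Y) : Prop :=
  IsChain R α ∧ IsChain R β ∧ α.head? = β.head? ∧ α.getLast? = β.getLast? ∧
    ∃ (γ δ : List Y) (x : Y),
      (α = γ ++ δ ∧ β = γ ++ x :: δ) ∨ (β = γ ++ δ ∧ α = γ ++ x :: δ)

/-- Two chains are homotopic (relative to `R`) if they are connected by a finite
sequence of basic moves. -/
def Homotopic {Y : Type*} (R : Y → Y → Prop) : List Y → List Y → Prop :=
  Relation.ReflTransGen (Move R)

/-- The chain `α` starts at `x` and ends at `y`. -/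
def FromTo {Y : Type*} (α : List Y) (x y : Y) : Prop :=
  α.head? = some x ∧ α.getLast? = some y

end WC
/-- The relation "distance less than `ε`" on a metric space. -/
def MRel {X : Type*} [MetricSpace X] (ε : ℝ) : X → X → Prop :=
  fun x y => dist x y < ε

/-- An `ε`-chain in a metric space. -/
def MChain {X : Type*} [MetricSpace X] (ε : ℝ) (α : List X) : Prop :=
  WC.IsChain (MRel ε) α

/-- `ε`-homotopy of chains in a metric space. -/
def MHomotopic {X : Type*} [MetricSpace X] (ε : ℝ) : List X → List X → Prop :=
  WC.Homotopic (MRel ε)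

/-- A metric space is chain connected if any two points are joined by an
`ε`-chain for every `ε > 0`. -/
def ChainConnected (X : Type*) [MetricSpace X] : Prop :=
  ∀ ε : ℝ, 0 < ε → ∀ x y : X, ∃ α : List X, MChain ε α ∧ WC.FromTo α x y

/-- A metric space is weakly chained if it is chain connected and for every
`ε > 0` there is `δ > 0` such that any two points at distance `< δ` are joined
by arbitrarily fine chains that are `ε`-homotopic to the two-point chain formed
by those points. -/
def WeaklyChained (X : Type*) [MetricSpace X] : Prop :=
  ChainConnected X ∧
    ∀ ε : ℝ, 0 < ε → ∃ δ : ℝ, 0 < δ ∧ ∀ x y : X, dist x y < δ →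
      ∀ κ : ℝ, 0 < κ → ∃ α : List X, MChain κ α ∧ WC.FromTo α x y ∧
        MHomotopic ε α [x, y]

/-- `f` is `(ε,δ)`-refining: whenever `d(a,b) < δ` in `Y` and `a', b'` are
preimages of `a, b`, there are arbitrarily fine chains `α` from `a'` to `b'`
with `[f(α)]_ε = [a,b]_ε`. -/
def Refining {X Y : Type*} [MetricSpace X] [MetricSpace Y] (f : X → Y)
    (ε δ : ℝ) : Prop :=
  ∀ a b : Y, dist a b < δ → ∀ a' b' : X, f a' = a → f b' = b →
    ∀ κ : ℝ, 0 < κ → ∃ α : List X, MChain κ α ∧ WC.FromTo α a' b' ∧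
      MHomotopic ε (α.map f) [a, b]

/-- The preimage diameter of `f`: the supremum over `y` of the diameters of the
fibers `f⁻¹(y)`. -/
noncomputable def PD {X Y : Type*} [MetricSpace X] [MetricSpace Y]
    (f : X → Y) : ℝ :=
  ⨆ y : Y, Metric.diam (f ⁻¹' {y})

/-- `X` is a geodesic space: any two points are joined by an isometric
embedding of `[0, d(x,y)]`. -/
def IsGeodesicSpace (X : Type*) [MetricSpace X] : Prop :=
  ∀ x y : X, ∃ γ : ℝ → X, γ 0 = x ∧ γ (dist x y) = y ∧
    ∀ s ∈ Set.Icc (0 : ℝ) (dist x y), ∀ t ∈ Set.Icc (0 : ℝ) (dist x y),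
      dist (γ s) (γ t) = |s - t|

/-!
The fibres of `f` have diameter at most `PD f < ε`, so by compactness of `X` there is `η > 0`
such that points of `X` whose images are `η`-close are `ε`-close. Given `d(a, b) < δ ≤ η`,
the preimages `a'`, `b'` are then at distance `< ε`, and sampling a geodesic from `a'` to `b'`
finely gives a `κ`-chain all of whose points lie within `d(a', b')` of `a'`. As `f` is
`1`-Lipschitz, the image chain is an `ε`-chain staying `ε`-close to `a`, so its interior points
can be deleted one at a time, which is an `ε`-homotopy to `[a, b]`.
-/

namespace WC

variable {Y : Type*} {R : Y → Y → Prop}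

theorem FromTo.map {Z : Type*} (g : Y → Z) {α : List Y} {x y : Y} (h : FromTo α x y) :
    FromTo (α.map g) (g x) (g y) := by
  obtain ⟨hx, hy⟩ := h
  exact ⟨by simp [hx], by simp [hy]⟩

theorem homotopic_pair_of_forall_mem_rel {β : List Y} {y w : Y} (hβ : IsChain R β)
    (hyw : FromTo β y w) (hR : ∀ z ∈ β, R y z) : Homotopic R β [y, w] := by
  obtain ⟨l, rfl⟩ : ∃ l, β = y :: l := List.head?_eq_some_iff.mp hyw.1
  induction l with
  | nil =>
    obtain rfl : y = w := by simpa [FromTo] using hyw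
    have hyy : R y y := hR y List.mem_cons_self
    exact .single ⟨hβ, List.isChain_pair.mpr hyy, rfl, rfl, [y], [], y, .inl ⟨rfl, rfl⟩⟩
  | cons z l ih =>
    cases l with
    | nil =>
      obtain rfl : z = w := by simpa [FromTo] using hyw
      exact .refl
    | cons z' l =>
      have hRz' : R y z' := hR z' (by simp)
      have hβ' : IsChain R (y :: z' :: l) :=
        List.isChain_cons_cons.mpr ⟨hRz', (List.isChain_cons_cons.mp hβ).2.tail⟩
      have hmove : Move R (y :: z :: z' :: l) (y :: z' :: l) :=
        ⟨hβ, hβ', rfl, by simp, [y], z' :: l, z, .inr ⟨rfl, rfl⟩⟩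
      refine .head hmove (ih hβ' ⟨rfl, ?_⟩ fun t ht => hR t ?_)
      · simpa using hyw.2
      · simp only [List.mem_cons] at ht ⊢
        tauto

end WC

section Chains

variable {X : Type*} [MetricSpace X]

theorem MChain.mono {r s : ℝ} {α : List X} (h : MChain r α) (hrs : r ≤ s) : MChain s α :=
  List.IsChain.imp (fun _ _ hxy => hxy.trans_le hrs) h

theorem MChain.map {Z : Type*} [MetricSpace Z] {f : X → Z} (hf : LipschitzWith 1 f) {r : ℝ}
    {α : List X} (h : MChain r α) : MChain r (α.map f) :=
  List.isChain_map f |>.mpr <| List.IsChain.imp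
    (fun x y hxy => lt_of_le_of_lt (by simpa using hf.dist_le_mul x y) hxy) h

theorem exists_mchain_of_lipschitzOnWith {γ : ℝ → X} {L : ℝ} (hL : 0 ≤ L)
    (hγ : LipschitzOnWith 1 γ (Set.Icc 0 L)) {κ : ℝ} (hκ : 0 < κ) :
    ∃ α : List X, MChain κ α ∧ WC.FromTo α (γ 0) (γ L) ∧ ∀ z ∈ α, z ∈ γ '' Set.Icc 0 L := by
  obtain ⟨n, hn⟩ := exists_nat_gt (L / κ)
  have hn0 : (0 : ℝ) < n := (div_nonneg hL hκ.le).trans_lt hn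
  have hmem : ∀ i : ℕ, i ≤ n → (i : ℝ) * L / n ∈ Set.Icc 0 L := fun i hi =>
    ⟨by positivity, div_le_of_le_mul₀ hn0.le hL
      (by rw [mul_comm]; exact mul_le_mul_of_nonneg_left (by exact_mod_cast hi) hL)⟩
  refine ⟨(List.range (n + 1)).map fun i : ℕ => γ (i * L / n), ?_, ⟨?_, ?_⟩, ?_⟩
  · refine List.isChain_map _ |>.mpr <| List.isChain_range_succ _ _ |>.mpr fun i hi => ?_
    have hstep : dist ((i : ℝ) * L / n) ((i + 1 : ℕ) * L / n) = L / n := by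
      rw [Real.dist_eq, ← sub_div, abs_div, abs_of_pos hn0]
      push_cast
      rw [show (i : ℝ) * L - (i + 1) * L = -L by ring, abs_neg, abs_of_nonneg hL]
    calc dist (γ (i * L / n)) (γ ((i + 1 : ℕ) * L / n))
        ≤ dist ((i : ℝ) * L / n) ((i + 1 : ℕ) * L / n) := by
          simpa using hγ.dist_le_mul _ (hmem i hi.le) _ (hmem (i + 1) hi)
      _ = L / n := hstep
      _ < κ := (div_lt_iff₀ hn0).mpr (by rwa [div_lt_iff₀ hκ, mul_comm] at hn)
  · simp [List.range_succ_eq_map]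
  · simp [List.range_succ, hn0.ne', mul_div_cancel_left₀]
  · simp only [List.mem_map, List.mem_range]
    rintro _ ⟨i, hi, rfl⟩
    exact ⟨_, hmem i (Nat.le_of_lt_succ hi), rfl⟩

theorem IsGeodesicSpace.exists_mchain (hX : IsGeodesicSpace X) (x y : X) {κ : ℝ} (hκ : 0 < κ) :
    ∃ α : List X, MChain κ α ∧ WC.FromTo α x y ∧ ∀ z ∈ α, dist x z ≤ dist x y := by
  obtain ⟨γ, hγ0, hγL, hiso⟩ := hX x y
  have hlip : LipschitzOnWith 1 γ (Set.Icc 0 (dist x y)) :=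
    .of_dist_le_mul fun s hs t ht => by simp [hiso s hs t ht, Real.dist_eq]
  obtain ⟨α, hακ, hα, hmem⟩ := exists_mchain_of_lipschitzOnWith dist_nonneg hlip hκ
  refine ⟨α, hακ, hγ0 ▸ hγL ▸ hα, fun z hz => ?_⟩
  obtain ⟨t, ht, rfl⟩ := hmem z hz
  have h0 : (0 : ℝ) ∈ Set.Icc 0 (dist x y) := ⟨le_rfl, dist_nonneg⟩
  calc dist x (γ t) = t := by rw [← hγ0, hiso 0 h0 t ht, zero_sub, abs_neg, abs_of_nonneg ht.1]
    _ ≤ dist x y := ht.2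

end Chains

theorem dist_le_PD_of_map_eq {X Y : Type*} [MetricSpace X] [MetricSpace Y] [BoundedSpace X]
    {f : X → Y} {x x' : X} (h : f x = f x') : dist x x' ≤ PD f := by
  have hbdd : BddAbove (Set.range fun y => Metric.diam (f ⁻¹' {y})) :=
    ⟨Metric.diam (Set.univ : Set X), Set.forall_mem_range.mpr fun _ =>
      Metric.diam_mono (Set.subset_univ _) (.all _)⟩
  exact le_ciSup_of_le hbdd (f x')
    (Metric.dist_le_diam_of_mem (.all _) h rfl)

theorem exists_pos_forall_dist_lt_of_map_eq {X Y : Type*} [PseudoMetricSpace X] [CompactSpace X]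
    [MetricSpace Y] {f : X → Y} (hf : Continuous f) {ε : ℝ}
    (hfib : ∀ x x', f x = f x' → dist x x' < ε) :
    ∃ η > 0, ∀ x x', dist (f x) (f x') < η → dist x x' < ε := by
  set K := {p : X × X | ε ≤ dist p.1 p.2}
  have hK : IsCompact K := (isClosed_le continuous_const continuous_dist).isCompact
  have hcont : Continuous fun p : X × X => dist (f p.1) (f p.2) := by fun_prop
  have hpos : ∀ p ∈ K, 0 < dist (f p.1) (f p.2) := fun p hp =>
    dist_pos.mpr fun h => (hfib _ _ h).not_ge hp
  obtain ⟨η, hη, hKη⟩ := hK.exists_forall_le' hcont.continuousOn hpos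
  refine ⟨η, hη, fun x x' h => ?_⟩
  by_contra! hle
  exact (hKη (x, x') hle).not_gt h

theorem refining_of_geodesic_general {X Y : Type*} [MetricSpace X] [MetricSpace Y]
    [CompactSpace X] (f : X → Y)
    (hlip : LipschitzWith 1 f)
    (hgeo : IsGeodesicSpace X)
    (ε : ℝ) (hε : PD f < ε) :
    ∃ δ : ℝ, 0 < δ ∧ δ < ε ∧ Refining f ε δ := by
  have hε0 : 0 < ε := (Real.iSup_nonneg fun _ => Metric.diam_nonneg).trans_lt hε
  obtain ⟨η, hη0, hη⟩ := exists_pos_forall_dist_lt_of_map_eq hlip.continuous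
    fun x x' h => (dist_le_PD_of_map_eq h).trans_lt hε
  refine ⟨min η (ε / 2), by positivity, (min_le_right _ _).trans_lt (half_lt_self hε0), ?_⟩
  rintro _ _ hab a b rfl rfl κ hκ
  have hdist : dist a b < ε := hη a b (hab.trans_le (min_le_left _ _))
  obtain ⟨α, hακ, hα, hclose⟩ := hgeo.exists_mchain a b (lt_min hκ hε0)
  refine ⟨α, hακ.mono (min_le_left _ _), hα, WC.homotopic_pair_of_forall_mem_rel
    ((hακ.map hlip).mono (min_le_right _ _)) (hα.map f) ?_⟩
  simp only [List.mem_map]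
  rintro _ ⟨z, hz, rfl⟩
  calc dist (f a) (f z) ≤ dist a z := by simpa using hlip.dist_le_mul a z
    _ ≤ dist a b := hclose z hz
    _ < ε := hdist

/-- A continuous `1`-Lipschitz surjection `f : X → Y` between
compact metric spaces, with `X` geodesic, is `ε`-refining for every
`ε > PD(f)`. -/
theorem refining_of_geodesic {X Y : Type*} [MetricSpace X] [MetricSpace Y]
    [CompactSpace X] [CompactSpace Y] (f : X → Y)
    (hf : Continuous f) (hlip : LipschitzWith 1 f)
    (hsurj : Function.Surjective f) (hgeo : IsGeodesicSpace X)
    (ε : ℝ) (hε : PD f < ε) :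
    ∃ δ : ℝ, 0 < δ ∧ δ < ε ∧ Refining f ε δ :=
  refining_of_geodesic_general f hlip hgeo ε hε
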